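/- arXiv:2310.13969 — 2 statements merged into one kernel-verified Lean document; each statement's English description precedes it below -/
import Mathlib

section
/- For every iteration index l, there exists a subgradient v of Q_1 at ζ_1^{l+1} such that v + μ_1^{l+1} C + γ_1^{l+1} + s_1^{l+1} = 0, where s_1^{l+1} = ρ(ζ_2^{l+1} − ζ_2^l) is the dual residual of the first head machine. In other words, the first head machine satisfies the dual feasibility condition up to the dual residual s_1^{l+1}. -/
open Finset Filter
open scoped RealInnerProductSpace

noncomputable section

def IsSubgrad {d : ℕ} (f : EuclideanSpace ℝ (Fin d) → ℝ)
    (x v : EuclideanSpace ℝ (Fin d)) : Prop :=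
  ∀ z, f x + ⟪v, z - x⟫ ≤ f z

/-!
`ζ₁^{l+1}` minimizes `Q₁ + φ`, where `φ` is the smooth part of the augmented Lagrangian of
step (i). As `Q₁` is convex and `φ` is differentiable, first-order optimality gives
`-∇φ(ζ₁^{l+1}) ∈ ∂Q₁(ζ₁^{l+1})`, and the multiplier updates (v) rewrite
`∇φ(ζ₁^{l+1}) = (μ₁^l + ρ C⊤ζ₁^{l+1}) C + γ₁^l + ρ (ζ₁^{l+1} − ζ₂^l)`
as `μ₁^{l+1} C + γ₁^{l+1} + ρ (ζ₂^{l+1} − ζ₂^l)`.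
-/

lemma convexOn_sq_norm_sub_linearMap {E F : Type*} [AddCommGroup E] [Module ℝ E]
    [NormedAddCommGroup F] [NormedSpace ℝ F] (y : F) (A : E →ₗ[ℝ] F) :
    ConvexOn ℝ Set.univ fun z => ‖y - A z‖ ^ 2 :=
  ((convexOn_norm convex_univ).comp_affineMap (AffineMap.const ℝ E y - A.toAffineMap)).pow
    (fun _ _ => norm_nonneg _) 2

lemma convexOn_weighted_sum_abs {ι : Type*} [Fintype ι] {ω : ι → ℝ} (hω : ∀ j, 0 ≤ ω j) :
    ConvexOn ℝ Set.univ fun z : EuclideanSpace ℝ ι => ∑ j, ω j * |z j| := by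
  have hterm (j : ι) : ConvexOn ℝ Set.univ fun z : EuclideanSpace ℝ ι => ω j * |z j| :=
    ((convexOn_norm convex_univ).comp_linearMap
      (EuclideanSpace.proj j (𝕜 := ℝ)).toLinearMap).smul (hω j)
  have hsum : (fun z : EuclideanSpace ℝ ι => ∑ j, ω j * |z j|) = ∑ j, fun z => ω j * |z j| := by
    ext z
    simp only [Finset.sum_apply]
  rw [hsum]
  exact Finset.sum_induction _ (ConvexOn ℝ Set.univ) (fun _ _ => ConvexOn.add)
    (convexOn_const 0 convex_univ) fun j _ => hterm j

lemma convexOn_lasso {ι F : Type*} [Fintype ι] [NormedAddCommGroup F] [NormedSpace ℝ F]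
    (y : F) (A : EuclideanSpace ℝ ι →ₗ[ℝ] F) {c lam : ℝ} (hc : 0 ≤ c) (hlam : 0 ≤ lam)
    {ω : ι → ℝ} (hω : ∀ j, 0 ≤ ω j) :
    ConvexOn ℝ Set.univ fun z => c * ‖y - A z‖ ^ 2 + lam * ∑ j, ω j * |z j| :=
  ((convexOn_sq_norm_sub_linearMap y A).smul hc).add ((convexOn_weighted_sum_abs hω).smul hlam)

section FirstOrderOptimality

variable {E : Type*} [NormedAddCommGroup E] [InnerProductSpace ℝ E]

theorem ConvexOn.le_of_isMinOn_add_of_hasGradientAt [CompleteSpace E] {f h : E → ℝ} {x g : E}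
    (hf : ConvexOn ℝ Set.univ f) (hh : HasGradientAt h g x) (hmin : IsMinOn (f + h) Set.univ x)
    (z : E) : f x + ⟪-g, z - x⟫ ≤ f z := by
  set v := z - x
  have hline : HasDerivAt (fun t : ℝ => h (x + t • v)) ⟪g, v⟫ 0 := by
    have hl : HasDerivAt (fun t : ℝ => x + t • v) v 0 := by
      simpa using ((hasDerivAt_id (0 : ℝ)).smul_const v).const_add x
    exact (hasGradientAt_iff_hasFDerivAt.mp hh).comp_hasDerivAt_of_eq (0 : ℝ) hl (by simp)
  -- compare `x` with the points `x + t • v` of the segment towards `z`, then let `t → 0⁺`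
  have hslope : ∀ t ∈ Set.Ioc (0 : ℝ) 1, f x - f z ≤ t⁻¹ * (h (x + t • v) - h x) := by
    rintro t ⟨ht0, ht1⟩
    have hconv : f (x + t • v) ≤ (1 - t) * f x + t * f z := by
      have hpt : x + t • v = (1 - t) • x + t • z := by
        simp only [v, smul_sub, sub_smul, one_smul]
        abel
      simpa only [hpt, smul_eq_mul] using
        hf.2 (Set.mem_univ x) (Set.mem_univ z) (by linarith : (0 : ℝ) ≤ 1 - t) ht0.le (by ring)
    have hopt : f x + h x ≤ f (x + t • v) + h (x + t • v) := hmin (Set.mem_univ _)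
    rw [le_inv_mul_iff₀ ht0]
    linarith
  have hlim : f x - f z ≤ ⟪g, v⟫ := by
    refine ge_of_tendsto hline.tendsto_slope_zero_right ?_
    filter_upwards [Ioc_mem_nhdsGT (zero_lt_one' ℝ)] with t ht
    simpa using hslope t ht
  rw [inner_neg_left]
  linarith

def augLagPenalty (m ρ : ℝ) (C γ w z : E) : ℝ :=
  m * ⟪C, z⟫ + ρ / 2 * ⟪C, z⟫ ^ 2 + ⟪γ, z - w⟫ + ρ / 2 * ‖z - w‖ ^ 2

theorem hasGradientAt_augLagPenalty [CompleteSpace E] (m ρ : ℝ) (C γ w x : E) :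
    HasGradientAt (augLagPenalty m ρ C γ w) ((m + ρ * ⟪C, x⟫) • C + γ + ρ • (x - w)) x := by
  have hC := (innerSL ℝ C).hasFDerivAt (x := x)
  have hγ := ((innerSL ℝ γ).hasFDerivAt (x := x)).sub_const ⟪γ, w⟫
  have hw := ((hasFDerivAt_id x).sub_const w).norm_sq
  rw [hasGradientAt_iff_hasFDerivAt]
  refine ((((hC.const_mul m).add ((hC.pow 2).const_mul (ρ / 2))).add hγ).add
    (hw.const_mul (ρ / 2))).congr_fderiv ?_ |>.congr_of_eventuallyEq ?_
  · ext u
    simp only [coe_innerSL_apply, Nat.add_one_sub_one, pow_one, nsmul_eq_mul, Nat.cast_ofNat,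
      id_eq, map_sub, ContinuousLinearMap.comp_id, add_apply, smul_apply, smul_eq_mul, sub_apply,
      map_add, map_smul, InnerProductSpace.toDual_apply_apply]
    ring
  · exact Eventually.of_forall fun z => by simp [augLagPenalty, inner_sub_right]

end FirstOrderOptimality

theorem dsgcdmm_head_dual_residual_first_general
    (d K : ℕ) (hK : 2 ≤ K)
    (n : ℕ → ℕ)
    (y : ∀ k, EuclideanSpace ℝ (Fin (n k)))
    (P : ∀ k, Matrix (Fin (n k)) (Fin d) ℝ)
    (lam : ℝ) (hlam : 0 ≤ lam)
    (ω : ℕ → Fin d → ℝ) (hω : ∀ k ∈ Icc 1 K, ∀ j, 0 ≤ ω k j)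
    (C : EuclideanSpace ℝ (Fin d))
    (Q : ℕ → EuclideanSpace ℝ (Fin d) → ℝ)
    (hQ : ∀ k, ∀ x : EuclideanSpace ℝ (Fin d), Q k x =
      (1 / (2 * (n k : ℝ))) * ‖y k - (P k).toEuclideanLin x‖ ^ 2
        + lam * ∑ j, ω k j * |x j|)
    (ρ : ℝ)
    (ζ : ℕ → ℕ → EuclideanSpace ℝ (Fin d))
    (μ : ℕ → ℕ → ℝ)
    (γ : ℕ → ℕ → EuclideanSpace ℝ (Fin d))
    (hdyn1 : ∀ l : ℕ, ∀ z : EuclideanSpace ℝ (Fin d),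
      Q 1 (ζ (l+1) 1) + μ l 1 * ⟪C, ζ (l+1) 1⟫ + (ρ/2) * ⟪C, ζ (l+1) 1⟫ ^ 2
          + ⟪γ l 1, ζ (l+1) 1 - ζ l 2⟫ + (ρ/2) * ‖ζ (l+1) 1 - ζ l 2‖ ^ 2
        ≤ Q 1 z + μ l 1 * ⟪C, z⟫ + (ρ/2) * ⟪C, z⟫ ^ 2
          + ⟪γ l 1, z - ζ l 2⟫ + (ρ/2) * ‖z - ζ l 2‖ ^ 2)
    (hμ : ∀ l : ℕ, ∀ k ∈ Icc 1 K, μ (l+1) k = μ l k + ρ * ⟪C, ζ (l+1) k⟫)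
    (hγ : ∀ l : ℕ, ∀ k ∈ Icc 1 (K-1),
      γ (l+1) k = γ l k + ρ • (ζ (l+1) k - ζ (l+1) (k+1)))
    :
    ∀ l : ℕ, ∃ v : EuclideanSpace ℝ (Fin d), IsSubgrad (Q 1) (ζ (l+1) 1) v ∧
      v + μ (l+1) 1 • C + γ (l+1) 1 + ρ • (ζ (l+1) 2 - ζ l 2) = 0 := by
  intro l
  have h1K : 1 ∈ Icc 1 K := mem_Icc.mpr ⟨le_rfl, by omega⟩
  have h1K' : 1 ∈ Icc 1 (K - 1) := mem_Icc.mpr ⟨le_rfl, by omega⟩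
  have hconv : ConvexOn ℝ Set.univ (Q 1) := by
    rw [funext (hQ 1)]
    exact convexOn_lasso _ _ (by positivity) hlam (hω 1 h1K)
  have hmin : IsMinOn (Q 1 + augLagPenalty (μ l 1) ρ C (γ l 1) (ζ l 2)) Set.univ (ζ (l+1) 1) :=
    isMinOn_univ_iff.mpr fun z => by
      have := hdyn1 l z
      simp only [Pi.add_apply, augLagPenalty]
      linarith
  refine ⟨_, hconv.le_of_isMinOn_add_of_hasGradientAt
    (hasGradientAt_augLagPenalty _ _ _ _ _ _) hmin, ?_⟩
  rw [hμ l 1 h1K, hγ l 1 h1K']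
  module

/-- the first head machine satisfies the dual feasibility condition up to its dual residual s₁ = ρ(ζ₂^{l+1} − ζ₂^l). -/
theorem dsgcdmm_head_dual_residual_first
    (d K : ℕ) (hd : 1 ≤ d) (hK : 2 ≤ K) (hKeven : Even K)
    (n : ℕ → ℕ) (hn : ∀ k ∈ Icc 1 K, 1 ≤ n k)
    (y : ∀ k, EuclideanSpace ℝ (Fin (n k)))
    (P : ∀ k, Matrix (Fin (n k)) (Fin d) ℝ)
    (lam : ℝ) (hlam : 0 ≤ lam)
    (ω : ℕ → Fin d → ℝ) (hω : ∀ k ∈ Icc 1 K, ∀ j, 0 ≤ ω k j)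
    (C : EuclideanSpace ℝ (Fin d))
    (Q : ℕ → EuclideanSpace ℝ (Fin d) → ℝ)
    (hQ : ∀ k, ∀ x : EuclideanSpace ℝ (Fin d), Q k x =
      (1 / (2 * (n k : ℝ))) * ‖y k - (P k).toEuclideanLin x‖ ^ 2
        + lam * ∑ j, ω k j * |x j|)
    (ρ : ℝ) (hρ : 0 < ρ)
    (ζ : ℕ → ℕ → EuclideanSpace ℝ (Fin d))
    (μ : ℕ → ℕ → ℝ)
    (γ : ℕ → ℕ → EuclideanSpace ℝ (Fin d))
    (hdyn1 : ∀ l : ℕ, ∀ z : EuclideanSpace ℝ (Fin d),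
      Q 1 (ζ (l+1) 1) + μ l 1 * ⟪C, ζ (l+1) 1⟫ + (ρ/2) * ⟪C, ζ (l+1) 1⟫ ^ 2
          + ⟪γ l 1, ζ (l+1) 1 - ζ l 2⟫ + (ρ/2) * ‖ζ (l+1) 1 - ζ l 2‖ ^ 2
        ≤ Q 1 z + μ l 1 * ⟪C, z⟫ + (ρ/2) * ⟪C, z⟫ ^ 2
          + ⟪γ l 1, z - ζ l 2⟫ + (ρ/2) * ‖z - ζ l 2‖ ^ 2)
    (hdynodd : ∀ l : ℕ, ∀ k, Odd k → 1 < k → k < K → ∀ z : EuclideanSpace ℝ (Fin d),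
      Q k (ζ (l+1) k) + μ l k * ⟪C, ζ (l+1) k⟫ + (ρ/2) * ⟪C, ζ (l+1) k⟫ ^ 2
          + ⟪γ l (k-1), ζ l (k-1) - ζ (l+1) k⟫ + ⟪γ l k, ζ (l+1) k - ζ l (k+1)⟫
          + (ρ/2) * ‖ζ l (k-1) - ζ (l+1) k‖ ^ 2 + (ρ/2) * ‖ζ (l+1) k - ζ l (k+1)‖ ^ 2
        ≤ Q k z + μ l k * ⟪C, z⟫ + (ρ/2) * ⟪C, z⟫ ^ 2
          + ⟪γ l (k-1), ζ l (k-1) - z⟫ + ⟪γ l k, z - ζ l (k+1)⟫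
          + (ρ/2) * ‖ζ l (k-1) - z‖ ^ 2 + (ρ/2) * ‖z - ζ l (k+1)‖ ^ 2)
    (hdyneven : ∀ l : ℕ, ∀ k, Even k → 0 < k → k < K → ∀ z : EuclideanSpace ℝ (Fin d),
      Q k (ζ (l+1) k) + μ l k * ⟪C, ζ (l+1) k⟫ + (ρ/2) * ⟪C, ζ (l+1) k⟫ ^ 2
          + ⟪γ l (k-1), ζ (l+1) (k-1) - ζ (l+1) k⟫ + ⟪γ l k, ζ (l+1) k - ζ (l+1) (k+1)⟫
          + (ρ/2) * ‖ζ (l+1) (k-1) - ζ (l+1) k‖ ^ 2 + (ρ/2) * ‖ζ (l+1) k - ζ (l+1) (k+1)‖ ^ 2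
        ≤ Q k z + μ l k * ⟪C, z⟫ + (ρ/2) * ⟪C, z⟫ ^ 2
          + ⟪γ l (k-1), ζ (l+1) (k-1) - z⟫ + ⟪γ l k, z - ζ (l+1) (k+1)⟫
          + (ρ/2) * ‖ζ (l+1) (k-1) - z‖ ^ 2 + (ρ/2) * ‖z - ζ (l+1) (k+1)‖ ^ 2)
    (hdynK : ∀ l : ℕ, ∀ z : EuclideanSpace ℝ (Fin d),
      Q K (ζ (l+1) K) + μ l K * ⟪C, ζ (l+1) K⟫ + (ρ/2) * ⟪C, ζ (l+1) K⟫ ^ 2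
          + ⟪γ l (K-1), ζ (l+1) (K-1) - ζ (l+1) K⟫ + (ρ/2) * ‖ζ (l+1) (K-1) - ζ (l+1) K‖ ^ 2
        ≤ Q K z + μ l K * ⟪C, z⟫ + (ρ/2) * ⟪C, z⟫ ^ 2
          + ⟪γ l (K-1), ζ (l+1) (K-1) - z⟫ + (ρ/2) * ‖ζ (l+1) (K-1) - z‖ ^ 2)
    (hμ : ∀ l : ℕ, ∀ k ∈ Icc 1 K, μ (l+1) k = μ l k + ρ * ⟪C, ζ (l+1) k⟫)
    (hγ : ∀ l : ℕ, ∀ k ∈ Icc 1 (K-1),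
      γ (l+1) k = γ l k + ρ • (ζ (l+1) k - ζ (l+1) (k+1)))
    :
    ∀ l : ℕ, ∃ v : EuclideanSpace ℝ (Fin d), IsSubgrad (Q 1) (ζ (l+1) 1) v ∧
      v + μ (l+1) 1 • C + γ (l+1) 1 + ρ • (ζ (l+1) 2 - ζ l 2) = 0 :=
  dsgcdmm_head_dual_residual_first_general d K hK n y P lam hlam ω hω C Q hQ ρ ζ μ γ hdyn1 hμ hγ
end
end

section
/- (Theorem 1, part 1.) Under the DSGCDMM dynamics and the existence of a saddle point, the primal residual of the zero-sum constraint converges to zero: for every k = 1,…,K, g_k^l = C⊤ζ_k^l → 0 as l → ∞. -/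
/-!
The argument is the classical Lyapunov analysis of ADMM. Every machine update minimises a convex
function plus a quadratic, so its first-order optimality condition, rewritten with the updated
multipliers, bounds `Q_k(ζ_k^{l+1}) - Q_k(ζ★)`. Summing over the machines and adding the
saddle-point inequality at the current iterate, the multiplier terms become the decrease of
`V_l = (Σ_k (μ_k^l - μ_k★)² + Σ_e ‖γ_e^l - γ_e★‖²) / (2ρ) + (ρ/2) Σ_e ‖ζ_{v(e)}^l - ζ★‖²`,
where `v(e)` is the even end of the edge `e = (e, e + 1)`; the stale neighbour values read by the
odd machines are absorbed by the four-point identity for inner products. Hence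
`V_{l+1} + (ρ/2) Σ_k (C⊤ζ_k^{l+1})² ≤ V_l`, so the residuals are square-summable and tend to 0.
-/

open Finset Filter
open scoped RealInnerProductSpace

noncomputable section

theorem Finset.sum_Icc_ite_lt_add_ite_one_lt {M : Type*} [AddCommMonoid M] (K : ℕ) (f g : ℕ → M) :
    ∑ k ∈ Icc 1 K, ((if k < K then f k else 0) + (if 1 < k then g k else 0)) =
      ∑ e ∈ Icc 1 (K - 1), (f e + g (e + 1)) := by
  rw [sum_add_distrib, sum_add_distrib, ← sum_filter, ← sum_filter]
  congr 1
  · congr 1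
    ext k
    simp only [mem_filter, mem_Icc]
    omega
  · calc _ = ∑ k ∈ Icc (1 + 1) (K - 1 + 1), g k := by
          congr 1
          ext k
          simp only [mem_filter, mem_Icc]
          omega
      _ = _ := by rw [← map_add_right_Icc, sum_map]; rfl

theorem tendsto_zero_of_mul_sq_le_sub_succ {u V : ℕ → ℝ} {c : ℝ} (hc : 0 < c)
    (hV : ∀ l, 0 ≤ V l) (h : ∀ l, c * u l ^ 2 ≤ V l - V (l + 1)) :
    Tendsto u atTop (nhds 0) := by
  have hsum : Summable fun l => c * u l ^ 2 :=
    summable_of_sum_range_le (c := V 0) (fun l => by positivity) fun N =>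
      (sum_le_sum fun l _ => h l).trans (by rw [sum_range_sub']; linarith [hV N])
  have hsq : Tendsto (fun l => u l ^ 2) atTop (nhds 0) := by
    simpa [hc.ne'] using hsum.tendsto_atTop_zero.const_mul c⁻¹
  rw [tendsto_zero_iff_abs_tendsto_zero]
  simpa [Real.sqrt_sq_eq_abs, Function.comp_def] using hsq.sqrt

theorem convexOn_sum_mul_abs {ι : Type*} [Fintype ι] (ω : ι → ℝ) (hω : ∀ j, 0 ≤ ω j) :
    ConvexOn ℝ Set.univ fun x : EuclideanSpace ℝ ι => ∑ j, ω j * |x j| := by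
  have := Finset.sum_induction (s := Finset.univ) (fun j (x : EuclideanSpace ℝ ι) => ω j * |x j|)
    (ConvexOn ℝ Set.univ) (fun _ _ => ConvexOn.add) (convexOn_const 0 convex_univ) fun j _ =>
      (convexOn_univ_norm.comp_linearMap
        (EuclideanSpace.proj j : EuclideanSpace ℝ ι →L[ℝ] ℝ).toLinearMap).smul (hω j)
  simpa only [Finset.sum_fn] using this

theorem convexOn_norm_sub_sq {E F : Type*} [AddCommGroup E] [Module ℝ E] [NormedAddCommGroup F]
    [NormedSpace ℝ F] (y : F) (T : E →ₗ[ℝ] F) : ConvexOn ℝ Set.univ fun x => ‖y - T x‖ ^ 2 :=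
  (convexOn_univ_norm.comp_affineMap (AffineMap.const ℝ E y - T.toAffineMap)).pow
    (fun _ _ => norm_nonneg _) 2

section InnerProductSpace

variable {E : Type*} [NormedAddCommGroup E] [InnerProductSpace ℝ E]

theorem ConvexOn.le_add_of_isMin_add_quadratic {f S : E → ℝ} (hf : ConvexOn ℝ Set.univ f)
    {x z : E} {L c : ℝ} (hmin : ∀ u, f x + S x ≤ f u + S u)
    (hS : ∀ t : ℝ, S (x + t • (z - x)) = S x + t * L + t ^ 2 * c) :
    f x ≤ f z + L := by
  have hsmall : ∀ t ∈ Set.Ioc (0 : ℝ) 1, f x ≤ f z + L + t * c := by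
    rintro t ⟨ht0, ht1⟩
    have hconv : f (x + t • (z - x)) ≤ (1 - t) * f x + t * f z := by
      simpa [show (1 - t) • x + t • z = x + t • (z - x) by module] using
        hf.2 (Set.mem_univ x) (Set.mem_univ z) (sub_nonneg.2 ht1) ht0.le (by ring)
    have := hmin (x + t • (z - x))
    rw [hS] at this
    nlinarith
  have hlim : Tendsto (fun t : ℝ => f z + L + t * c) (nhdsWithin 0 (Set.Ioi 0))
      (nhds (f z + L)) := by
    simpa using ((tendsto_id.mul_const c).const_add (f z + L)).mono_left
      (nhdsWithin_le_nhds (a := (0 : ℝ)))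
  exact ge_of_tendsto hlim (mem_of_superset (Ioc_mem_nhdsGT one_pos) hsmall)

theorem norm_add_smul_sub_sq (x w b : E) (t : ℝ) :
    ‖x + t • w - b‖ ^ 2 = ‖x - b‖ ^ 2 + t * (2 * ⟪x - b, w⟫) + t ^ 2 * ‖w‖ ^ 2 := by
  rw [add_sub_right_comm, norm_add_sq_real, real_inner_smul_right, norm_smul, mul_pow,
    Real.norm_eq_abs, sq_abs]
  ring

theorem norm_sub_add_smul_sq (a x w : E) (t : ℝ) :
    ‖a - (x + t • w)‖ ^ 2 = ‖a - x‖ ^ 2 - t * (2 * ⟪a - x, w⟫) + t ^ 2 * ‖w‖ ^ 2 := by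
  rw [← sub_sub, norm_sub_sq_real, real_inner_smul_right, norm_smul, mul_pow,
    Real.norm_eq_abs, sq_abs]
  ring

theorem two_mul_inner_sub_sub_le (a b s u : E) :
    2 * ⟪a - b, s - u⟫ ≤ ‖u - a‖ ^ 2 + (‖b - s‖ ^ 2 - ‖a - s‖ ^ 2) := by
  have key : ∀ p q r : E, 2 * ⟪p - q, -r⟫ + ‖r - q‖ ^ 2 = ‖r - p‖ ^ 2 + (‖q‖ ^ 2 - ‖p‖ ^ 2) := by
    intro p q r
    rw [norm_sub_sq_real r p, norm_sub_sq_real r q, inner_neg_right, inner_sub_left,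
      real_inner_comm p, real_inner_comm q]
    ring
  have h := key (a - s) (b - s) (u - s)
  rw [show a - s - (b - s) = a - b by abel, show -(u - s) = s - u by abel,
    show u - s - (b - s) = u - b by abel, show u - s - (a - s) = u - a by abel] at h
  linarith [sq_nonneg ‖u - b‖]

theorem inner_sub_eq_of_eq_add_smul {a a' b r : E} {ρ : ℝ} (hρ : ρ ≠ 0) (h : a' = a + ρ • r) :
    ⟪a' - b, r⟫ = (‖a' - b‖ ^ 2 - ‖a - b‖ ^ 2) / (2 * ρ) + ρ / 2 * ‖r‖ ^ 2 := by
  have ha : a - b = (a' - b) - ρ • r := by rw [h]; abel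
  rw [ha, norm_sub_sq_real (a' - b), real_inner_smul_right, norm_smul, mul_pow, Real.norm_eq_abs,
    sq_abs]
  field_simp
  ring

end InnerProductSpace

section Lyapunov

variable {E : Type*} [NormedAddCommGroup E]

/-- Only the even endpoint of each edge is tracked: the odd machines update first and read the
even ones one iteration behind. -/
def dsgcdmmLyapunov (K : ℕ) (ρ : ℝ) (s : E) (μs : ℕ → ℝ) (γs : ℕ → E) (x : ℕ → E) (μ : ℕ → ℝ)
    (γ : ℕ → E) : ℝ :=
  (∑ k ∈ Icc 1 K, (μ k - μs k) ^ 2 + ∑ e ∈ Icc 1 (K - 1), ‖γ e - γs e‖ ^ 2) / (2 * ρ)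
    + ρ / 2 * ∑ e ∈ Icc 1 (K - 1), ‖x (if Even e then e else e + 1) - s‖ ^ 2

theorem dsgcdmmLyapunov_nonneg {K : ℕ} {ρ : ℝ} (hρ : 0 ≤ ρ) (s : E) (μs : ℕ → ℝ) (γs : ℕ → E)
    (x : ℕ → E) (μ : ℕ → ℝ) (γ : ℕ → E) : 0 ≤ dsgcdmmLyapunov K ρ s μs γs x μ γ := by
  unfold dsgcdmmLyapunov
  positivity

end Lyapunov

section DSGCDMM

variable {E : Type*} [NormedAddCommGroup E] [InnerProductSpace ℝ E]

/- In the three machine updates below, `a` and `b` are the neighbour values the machine reads and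
`x₀`, `x₂` the neighbours' new values, which enter the multiplier updates. -/
theorem le_of_isMin_firstMachine {f : E → ℝ} (hf : ConvexOn ℝ Set.univ f) {C x x₂ b γ γ' s : E}
    {μ μ' ρ : ℝ}
    (hmin : ∀ z, f x + μ * ⟪C, x⟫ + ρ / 2 * ⟪C, x⟫ ^ 2 + ⟪γ, x - b⟫ + ρ / 2 * ‖x - b‖ ^ 2
      ≤ f z + μ * ⟪C, z⟫ + ρ / 2 * ⟪C, z⟫ ^ 2 + ⟪γ, z - b⟫ + ρ / 2 * ‖z - b‖ ^ 2)
    (hμ : μ' = μ + ρ * ⟪C, x⟫) (hγ : γ' = γ + ρ • (x - x₂)) :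
    f x ≤ f s + (μ' * ⟪C, s - x⟫ + (⟪γ', s - x⟫ + ρ * ⟪x₂ - b, s - x⟫)) := by
  subst hμ hγ
  refine hf.le_add_of_isMin_add_quadratic (c := ρ / 2 * ⟪C, s - x⟫ ^ 2 + ρ / 2 * ‖s - x‖ ^ 2)
    (S := fun z => μ * ⟪C, z⟫ + ρ / 2 * ⟪C, z⟫ ^ 2 + ⟪γ, z - b⟫ + ρ / 2 * ‖z - b‖ ^ 2)
    (fun z => by linarith [hmin z]) fun t => ?_
  simp only [norm_add_smul_sub_sq, inner_add_left, inner_add_right, inner_sub_left,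
    inner_sub_right, real_inner_smul_left, real_inner_smul_right]
  ring

theorem le_of_isMin_middleMachine {f : E → ℝ} (hf : ConvexOn ℝ Set.univ f)
    {C x x₀ x₂ a b γ₀ γ₀' γ γ' s : E} {μ μ' ρ : ℝ}
    (hmin : ∀ z, f x + μ * ⟪C, x⟫ + ρ / 2 * ⟪C, x⟫ ^ 2 + ⟪γ₀, a - x⟫ + ⟪γ, x - b⟫
        + ρ / 2 * ‖a - x‖ ^ 2 + ρ / 2 * ‖x - b‖ ^ 2
      ≤ f z + μ * ⟪C, z⟫ + ρ / 2 * ⟪C, z⟫ ^ 2 + ⟪γ₀, a - z⟫ + ⟪γ, z - b⟫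
        + ρ / 2 * ‖a - z‖ ^ 2 + ρ / 2 * ‖z - b‖ ^ 2)
    (hμ : μ' = μ + ρ * ⟪C, x⟫) (hγ₀ : γ₀' = γ₀ + ρ • (x₀ - x)) (hγ : γ' = γ + ρ • (x - x₂)) :
    f x ≤ f s + (μ' * ⟪C, s - x⟫
      + ((⟪γ', s - x⟫ + ρ * ⟪x₂ - b, s - x⟫) + (-⟪γ₀', s - x⟫ + ρ * ⟪x₀ - a, s - x⟫))) := by
  subst hμ hγ₀ hγ
  refine hf.le_add_of_isMin_add_quadratic (c := ρ / 2 * ⟪C, s - x⟫ ^ 2 + ρ * ‖s - x‖ ^ 2)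
    (S := fun z => μ * ⟪C, z⟫ + ρ / 2 * ⟪C, z⟫ ^ 2 + ⟪γ₀, a - z⟫ + ⟪γ, z - b⟫
        + ρ / 2 * ‖a - z‖ ^ 2 + ρ / 2 * ‖z - b‖ ^ 2)
    (fun z => by linarith [hmin z]) fun t => ?_
  simp only [norm_add_smul_sub_sq, norm_sub_add_smul_sq, inner_add_left, inner_add_right,
    inner_sub_left, inner_sub_right, real_inner_smul_left, real_inner_smul_right]
  ring

theorem le_of_isMin_lastMachine {f : E → ℝ} (hf : ConvexOn ℝ Set.univ f) {C x x₀ a γ₀ γ₀' s : E}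
    {μ μ' ρ : ℝ}
    (hmin : ∀ z, f x + μ * ⟪C, x⟫ + ρ / 2 * ⟪C, x⟫ ^ 2 + ⟪γ₀, a - x⟫ + ρ / 2 * ‖a - x‖ ^ 2
      ≤ f z + μ * ⟪C, z⟫ + ρ / 2 * ⟪C, z⟫ ^ 2 + ⟪γ₀, a - z⟫ + ρ / 2 * ‖a - z‖ ^ 2)
    (hμ : μ' = μ + ρ * ⟪C, x⟫) (hγ₀ : γ₀' = γ₀ + ρ • (x₀ - x)) :
    f x ≤ f s + (μ' * ⟪C, s - x⟫ + (-⟪γ₀', s - x⟫ + ρ * ⟪x₀ - a, s - x⟫)) := by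
  subst hμ hγ₀
  refine hf.le_add_of_isMin_add_quadratic (c := ρ / 2 * ⟪C, s - x⟫ ^ 2 + ρ / 2 * ‖s - x‖ ^ 2)
    (S := fun z => μ * ⟪C, z⟫ + ρ / 2 * ⟪C, z⟫ ^ 2 + ⟪γ₀, a - z⟫ + ρ / 2 * ‖a - z‖ ^ 2)
    (fun z => by linarith [hmin z]) fun t => ?_
  simp only [norm_sub_add_smul_sq, inner_add_left, inner_add_right, inner_sub_left,
    inner_sub_right, real_inner_smul_left, real_inner_smul_right]
  ring

structure IsDSGCDMMRun (K : ℕ) (Q : ℕ → E → ℝ) (C : E) (ρ : ℝ) (ζ : ℕ → ℕ → E)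
    (μ : ℕ → ℕ → ℝ) (γ : ℕ → ℕ → E) : Prop where
  first : ∀ l : ℕ, ∀ z : E,
    Q 1 (ζ (l+1) 1) + μ l 1 * ⟪C, ζ (l+1) 1⟫ + (ρ/2) * ⟪C, ζ (l+1) 1⟫ ^ 2
        + ⟪γ l 1, ζ (l+1) 1 - ζ l 2⟫ + (ρ/2) * ‖ζ (l+1) 1 - ζ l 2‖ ^ 2
      ≤ Q 1 z + μ l 1 * ⟪C, z⟫ + (ρ/2) * ⟪C, z⟫ ^ 2
        + ⟪γ l 1, z - ζ l 2⟫ + (ρ/2) * ‖z - ζ l 2‖ ^ 2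
  odd : ∀ l : ℕ, ∀ k, Odd k → 1 < k → k < K → ∀ z : E,
    Q k (ζ (l+1) k) + μ l k * ⟪C, ζ (l+1) k⟫ + (ρ/2) * ⟪C, ζ (l+1) k⟫ ^ 2
        + ⟪γ l (k-1), ζ l (k-1) - ζ (l+1) k⟫ + ⟪γ l k, ζ (l+1) k - ζ l (k+1)⟫
        + (ρ/2) * ‖ζ l (k-1) - ζ (l+1) k‖ ^ 2 + (ρ/2) * ‖ζ (l+1) k - ζ l (k+1)‖ ^ 2
      ≤ Q k z + μ l k * ⟪C, z⟫ + (ρ/2) * ⟪C, z⟫ ^ 2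
        + ⟪γ l (k-1), ζ l (k-1) - z⟫ + ⟪γ l k, z - ζ l (k+1)⟫
        + (ρ/2) * ‖ζ l (k-1) - z‖ ^ 2 + (ρ/2) * ‖z - ζ l (k+1)‖ ^ 2
  even : ∀ l : ℕ, ∀ k, Even k → 0 < k → k < K → ∀ z : E,
    Q k (ζ (l+1) k) + μ l k * ⟪C, ζ (l+1) k⟫ + (ρ/2) * ⟪C, ζ (l+1) k⟫ ^ 2
        + ⟪γ l (k-1), ζ (l+1) (k-1) - ζ (l+1) k⟫ + ⟪γ l k, ζ (l+1) k - ζ (l+1) (k+1)⟫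
        + (ρ/2) * ‖ζ (l+1) (k-1) - ζ (l+1) k‖ ^ 2 + (ρ/2) * ‖ζ (l+1) k - ζ (l+1) (k+1)‖ ^ 2
      ≤ Q k z + μ l k * ⟪C, z⟫ + (ρ/2) * ⟪C, z⟫ ^ 2
        + ⟪γ l (k-1), ζ (l+1) (k-1) - z⟫ + ⟪γ l k, z - ζ (l+1) (k+1)⟫
        + (ρ/2) * ‖ζ (l+1) (k-1) - z‖ ^ 2 + (ρ/2) * ‖z - ζ (l+1) (k+1)‖ ^ 2
  last : ∀ l : ℕ, ∀ z : E,
    Q K (ζ (l+1) K) + μ l K * ⟪C, ζ (l+1) K⟫ + (ρ/2) * ⟪C, ζ (l+1) K⟫ ^ 2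
        + ⟪γ l (K-1), ζ (l+1) (K-1) - ζ (l+1) K⟫ + (ρ/2) * ‖ζ (l+1) (K-1) - ζ (l+1) K‖ ^ 2
      ≤ Q K z + μ l K * ⟪C, z⟫ + (ρ/2) * ⟪C, z⟫ ^ 2
        + ⟪γ l (K-1), ζ (l+1) (K-1) - z⟫ + (ρ/2) * ‖ζ (l+1) (K-1) - z‖ ^ 2
  mu_succ : ∀ l : ℕ, ∀ k ∈ Icc 1 K, μ (l+1) k = μ l k + ρ * ⟪C, ζ (l+1) k⟫
  gamma_succ : ∀ l : ℕ, ∀ k ∈ Icc 1 (K-1), γ (l+1) k = γ l k + ρ • (ζ (l+1) k - ζ (l+1) (k+1))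

/-- Terms contributed by the edges `(k, k + 1)` and `(k - 1, k)` to the optimality condition of
machine `k`, with `x` the new primal iterate, `x'` the previous one and `γ` the new edge duals:
odd machines read their neighbours at `x'`, even ones at `x`. -/
def rightEdgeTerm (ρ : ℝ) (s : E) (γ x x' : ℕ → E) (k : ℕ) : ℝ :=
  ⟪γ k, s - x k⟫ + ρ * ⟪x (k + 1) - (if Odd k then x' else x) (k + 1), s - x k⟫

def leftEdgeTerm (ρ : ℝ) (s : E) (γ x x' : ℕ → E) (k : ℕ) : ℝ :=
  -⟪γ (k - 1), s - x k⟫ + ρ * ⟪x (k - 1) - (if Odd k then x' else x) (k - 1), s - x k⟫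

theorem IsDSGCDMMRun.le_add_edgeTerms {K : ℕ} {Q : ℕ → E → ℝ} {C : E} {ρ : ℝ}
    {ζ : ℕ → ℕ → E} {μ : ℕ → ℕ → ℝ} {γ : ℕ → ℕ → E} (h : IsDSGCDMMRun K Q C ρ ζ μ γ)
    (hK : Even K) (hQ : ∀ k ∈ Icc 1 K, ConvexOn ℝ Set.univ (Q k)) (s : E) (l : ℕ) {k : ℕ}
    (hk : k ∈ Icc 1 K) :
    Q k (ζ (l+1) k) ≤ Q k s + (μ (l+1) k * ⟪C, s - ζ (l+1) k⟫ +
      ((if k < K then rightEdgeTerm ρ s (γ (l+1)) (ζ (l+1)) (ζ l) k else 0) +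
        (if 1 < k then leftEdgeTerm ρ s (γ (l+1)) (ζ (l+1)) (ζ l) k else 0))) := by
  obtain ⟨hk1, hkK⟩ := mem_Icc.1 hk
  have hγ_right (hkK : k < K) : γ (l+1) k = γ l k + ρ • (ζ (l+1) k - ζ (l+1) (k+1)) :=
    h.gamma_succ l k (mem_Icc.2 ⟨hk1, by omega⟩)
  have hγ_left (hk1 : 1 < k) : γ (l+1) (k-1) = γ l (k-1) + ρ • (ζ (l+1) (k-1) - ζ (l+1) k) := by
    simpa [Nat.sub_add_cancel hk1.le] using h.gamma_succ l (k-1) (mem_Icc.2 ⟨by omega, by omega⟩)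
  rcases hk1.eq_or_lt with rfl | hk1
  · have hK1 : 1 < K := by rcases hK with ⟨m, rfl⟩; omega
    simp only [rightEdgeTerm, if_pos hK1, lt_irrefl, if_false, add_zero, if_pos odd_one]
    exact le_of_isMin_firstMachine (hQ 1 hk) (h.first l) (h.mu_succ l 1 hk) (hγ_right hK1)
  rcases hkK.eq_or_lt with rfl | hkK
  · simp only [leftEdgeTerm, lt_irrefl, if_false, if_pos hk1, zero_add,
      if_neg (Nat.not_odd_iff_even.2 hK)]
    exact le_of_isMin_lastMachine (hQ k hk) (h.last l) (h.mu_succ l k hk) (hγ_left hk1)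
  simp only [rightEdgeTerm, leftEdgeTerm, if_pos hkK, if_pos hk1]
  refine le_of_isMin_middleMachine (hQ k hk) ?_ (h.mu_succ l k hk) (hγ_left hk1) (hγ_right hkK)
  by_cases hodd : Odd k
  · simpa only [if_pos hodd] using h.odd l k hodd hk1 hkK
  · simpa only [if_neg hodd] using h.even l k (Nat.not_odd_iff_even.1 hodd) (by omega) hkK

theorem rightEdgeTerm_add_leftEdgeTerm_le {ρ : ℝ} (hρ : 0 ≤ ρ) (s : E) (γ x x' : ℕ → E)
    (e : ℕ) :
    rightEdgeTerm ρ s γ x x' e + leftEdgeTerm ρ s γ x x' (e + 1) ≤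
      -⟪γ e, x e - x (e + 1)⟫ + ρ / 2 * ‖x e - x (e + 1)‖ ^ 2 +
        ρ / 2 * (‖x' (if Even e then e else e + 1) - s‖ ^ 2
          - ‖x (if Even e then e else e + 1) - s‖ ^ 2) := by
  have hγ : ⟪γ e, s - x e⟫ - ⟪γ e, s - x (e + 1)⟫ = -⟪γ e, x e - x (e + 1)⟫ := by
    rw [← inner_sub_right, ← inner_neg_right, neg_sub, sub_sub_sub_cancel_left]
  simp only [rightEdgeTerm, leftEdgeTerm, Nat.add_sub_cancel]
  rcases Nat.even_or_odd e with he | ho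
  · have := two_mul_inner_sub_sub_le (x e) (x' e) s (x (e + 1))
    rw [norm_sub_rev (x (e + 1))] at this
    simp only [if_neg (Nat.not_odd_iff_even.2 he), if_pos he.add_one, if_pos he, sub_self,
      inner_zero_left, mul_zero]
    nlinarith
  · have := two_mul_inner_sub_sub_le (x (e + 1)) (x' (e + 1)) s (x e)
    simp only [if_pos ho, if_neg (Nat.not_odd_iff_even.2 ho.add_one),
      if_neg (Nat.not_even_iff_odd.2 ho), sub_self, inner_zero_left, mul_zero]
    nlinarith

theorem dsgcdmmLyapunov_succ_add_le {K : ℕ} {Q : ℕ → E → ℝ} {C s : E} {ρ : ℝ} (hρ : 0 < ρ)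
    (hs : ⟪C, s⟫ = 0) {μs : ℕ → ℝ} {γs : ℕ → E} {x x' : ℕ → E} {μ μ' : ℕ → ℝ} {γ γ' : ℕ → E}
    (hmachine : ∀ k ∈ Icc 1 K, Q k (x k) ≤ Q k s + (μ' k * ⟪C, s - x k⟫ +
      ((if k < K then rightEdgeTerm ρ s γ' x x' k else 0) +
        (if 1 < k then leftEdgeTerm ρ s γ' x x' k else 0))))
    (hsaddle : ∑ k ∈ Icc 1 K, Q k s ≤ ∑ k ∈ Icc 1 K, Q k (x k) + ∑ k ∈ Icc 1 K, μs k * ⟪C, x k⟫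
      + ∑ e ∈ Icc 1 (K - 1), ⟪γs e, x e - x (e + 1)⟫)
    (hμ : ∀ k ∈ Icc 1 K, μ' k = μ k + ρ * ⟪C, x k⟫)
    (hγ : ∀ e ∈ Icc 1 (K - 1), γ' e = γ e + ρ • (x e - x (e + 1))) :
    dsgcdmmLyapunov K ρ s μs γs x μ' γ' + ρ / 2 * ∑ k ∈ Icc 1 K, ⟪C, x k⟫ ^ 2 ≤
      dsgcdmmLyapunov K ρ s μs γs x' μ γ := by
  have hvertices : ∑ k ∈ Icc 1 K, (Q k (x k) + μ' k * ⟪C, x k⟫) ≤ ∑ k ∈ Icc 1 K, Q k s +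
      ∑ e ∈ Icc 1 (K - 1), (rightEdgeTerm ρ s γ' x x' e + leftEdgeTerm ρ s γ' x x' (e + 1)) := by
    rw [← sum_Icc_ite_lt_add_ite_one_lt, ← sum_add_distrib]
    refine sum_le_sum fun k hk => ?_
    have := hmachine k hk
    rw [inner_sub_right, hs] at this
    linarith
  have hedges := sum_le_sum fun e (_ : e ∈ Icc 1 (K - 1)) =>
    rightEdgeTerm_add_leftEdgeTerm_le hρ.le s γ' x x' e
  have hμ_sum := sum_congr rfl fun k hk => show (μ' k - μs k) * ⟪C, x k⟫ =
      ((μ' k - μs k) ^ 2 - (μ k - μs k) ^ 2) / (2 * ρ) + ρ / 2 * ⟪C, x k⟫ ^ 2 by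
    rw [hμ k hk]; field_simp; ring
  have hγ_sum := sum_congr rfl fun e he => inner_sub_eq_of_eq_add_smul (b := γs e) hρ.ne' (hγ e he)
  simp only [sum_add_distrib, sum_sub_distrib, ← sum_div, ← mul_sum, sub_mul, inner_sub_left,
    sum_neg_distrib, sub_div, mul_sub] at hvertices hedges hμ_sum hγ_sum
  simp only [dsgcdmmLyapunov, add_div]
  linarith

end DSGCDMM

theorem dsgcdmm_zero_sum_residual_tendsto_zero_general
    (d K : ℕ) (hKeven : Even K)
    (n : ℕ → ℕ)
    (y : ∀ k, EuclideanSpace ℝ (Fin (n k)))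
    (P : ∀ k, Matrix (Fin (n k)) (Fin d) ℝ)
    (lam : ℝ) (hlam : 0 ≤ lam)
    (ω : ℕ → Fin d → ℝ) (hω : ∀ k ∈ Icc 1 K, ∀ j, 0 ≤ ω k j)
    (C : EuclideanSpace ℝ (Fin d))
    (Q : ℕ → EuclideanSpace ℝ (Fin d) → ℝ)
    (hQ : ∀ k, ∀ x : EuclideanSpace ℝ (Fin d), Q k x =
      (1 / (2 * (n k : ℝ))) * ‖y k - (P k).toEuclideanLin x‖ ^ 2
        + lam * ∑ j, ω k j * |x j|)
    (ρ : ℝ) (hρ : 0 < ρ)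
    (ζ : ℕ → ℕ → EuclideanSpace ℝ (Fin d))
    (μ : ℕ → ℕ → ℝ)
    (γ : ℕ → ℕ → EuclideanSpace ℝ (Fin d))
    (hdyn1 : ∀ l : ℕ, ∀ z : EuclideanSpace ℝ (Fin d),
      Q 1 (ζ (l+1) 1) + μ l 1 * ⟪C, ζ (l+1) 1⟫ + (ρ/2) * ⟪C, ζ (l+1) 1⟫ ^ 2
          + ⟪γ l 1, ζ (l+1) 1 - ζ l 2⟫ + (ρ/2) * ‖ζ (l+1) 1 - ζ l 2‖ ^ 2
        ≤ Q 1 z + μ l 1 * ⟪C, z⟫ + (ρ/2) * ⟪C, z⟫ ^ 2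
          + ⟪γ l 1, z - ζ l 2⟫ + (ρ/2) * ‖z - ζ l 2‖ ^ 2)
    (hdynodd : ∀ l : ℕ, ∀ k, Odd k → 1 < k → k < K → ∀ z : EuclideanSpace ℝ (Fin d),
      Q k (ζ (l+1) k) + μ l k * ⟪C, ζ (l+1) k⟫ + (ρ/2) * ⟪C, ζ (l+1) k⟫ ^ 2
          + ⟪γ l (k-1), ζ l (k-1) - ζ (l+1) k⟫ + ⟪γ l k, ζ (l+1) k - ζ l (k+1)⟫
          + (ρ/2) * ‖ζ l (k-1) - ζ (l+1) k‖ ^ 2 + (ρ/2) * ‖ζ (l+1) k - ζ l (k+1)‖ ^ 2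
        ≤ Q k z + μ l k * ⟪C, z⟫ + (ρ/2) * ⟪C, z⟫ ^ 2
          + ⟪γ l (k-1), ζ l (k-1) - z⟫ + ⟪γ l k, z - ζ l (k+1)⟫
          + (ρ/2) * ‖ζ l (k-1) - z‖ ^ 2 + (ρ/2) * ‖z - ζ l (k+1)‖ ^ 2)
    (hdyneven : ∀ l : ℕ, ∀ k, Even k → 0 < k → k < K → ∀ z : EuclideanSpace ℝ (Fin d),
      Q k (ζ (l+1) k) + μ l k * ⟪C, ζ (l+1) k⟫ + (ρ/2) * ⟪C, ζ (l+1) k⟫ ^ 2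
          + ⟪γ l (k-1), ζ (l+1) (k-1) - ζ (l+1) k⟫ + ⟪γ l k, ζ (l+1) k - ζ (l+1) (k+1)⟫
          + (ρ/2) * ‖ζ (l+1) (k-1) - ζ (l+1) k‖ ^ 2 + (ρ/2) * ‖ζ (l+1) k - ζ (l+1) (k+1)‖ ^ 2
        ≤ Q k z + μ l k * ⟪C, z⟫ + (ρ/2) * ⟪C, z⟫ ^ 2
          + ⟪γ l (k-1), ζ (l+1) (k-1) - z⟫ + ⟪γ l k, z - ζ (l+1) (k+1)⟫
          + (ρ/2) * ‖ζ (l+1) (k-1) - z‖ ^ 2 + (ρ/2) * ‖z - ζ (l+1) (k+1)‖ ^ 2)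
    (hdynK : ∀ l : ℕ, ∀ z : EuclideanSpace ℝ (Fin d),
      Q K (ζ (l+1) K) + μ l K * ⟪C, ζ (l+1) K⟫ + (ρ/2) * ⟪C, ζ (l+1) K⟫ ^ 2
          + ⟪γ l (K-1), ζ (l+1) (K-1) - ζ (l+1) K⟫ + (ρ/2) * ‖ζ (l+1) (K-1) - ζ (l+1) K‖ ^ 2
        ≤ Q K z + μ l K * ⟪C, z⟫ + (ρ/2) * ⟪C, z⟫ ^ 2
          + ⟪γ l (K-1), ζ (l+1) (K-1) - z⟫ + (ρ/2) * ‖ζ (l+1) (K-1) - z‖ ^ 2)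
    (hμ : ∀ l : ℕ, ∀ k ∈ Icc 1 K, μ (l+1) k = μ l k + ρ * ⟪C, ζ (l+1) k⟫)
    (hγ : ∀ l : ℕ, ∀ k ∈ Icc 1 (K-1),
      γ (l+1) k = γ l k + ρ • (ζ (l+1) k - ζ (l+1) (k+1)))
    (ζs : EuclideanSpace ℝ (Fin d)) (μs : ℕ → ℝ) (γs : ℕ → EuclideanSpace ℝ (Fin d))
    (hCζs : ⟪C, ζs⟫ = 0)
    (hsaddle : ∀ zf : ℕ → EuclideanSpace ℝ (Fin d),
      (∑ k ∈ Icc 1 K, Q k ζs) + (∑ k ∈ Icc 1 K, μs k * ⟪C, ζs⟫)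
          + (∑ k ∈ Icc 1 (K-1), ⟪γs k, ζs - ζs⟫)
        ≤ (∑ k ∈ Icc 1 K, Q k (zf k)) + (∑ k ∈ Icc 1 K, μs k * ⟪C, zf k⟫)
          + (∑ k ∈ Icc 1 (K-1), ⟪γs k, zf k - zf (k+1)⟫))
    :
    ∀ k ∈ Icc 1 K, Tendsto (fun l : ℕ => ⟪C, ζ l k⟫) atTop (nhds 0) := by
  have hconv : ∀ k ∈ Icc 1 K, ConvexOn ℝ Set.univ (Q k) := fun k hk => by
    rw [funext (hQ k)]
    exact ((convexOn_norm_sub_sq (y k) (P k).toEuclideanLin).smul (by positivity)).add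
      ((convexOn_sum_mul_abs (ω k) (hω k hk)).smul hlam)
  have hrun : IsDSGCDMMRun K Q C ρ ζ μ γ := ⟨hdyn1, hdynodd, hdyneven, hdynK, hμ, hγ⟩
  have hdecrease (l : ℕ) :=
    dsgcdmmLyapunov_succ_add_le (μs := μs) (γs := γs) hρ hCζs
      (fun k hk => hrun.le_add_edgeTerms hKeven hconv ζs l hk)
      (by simpa only [hCζs, mul_zero, sum_const_zero, sub_self, inner_zero_right, add_zero]
        using hsaddle (ζ (l + 1)))
      (hμ l) (hγ l)
  intro k hk
  refine (tendsto_add_atTop_iff_nat 1).mp <| tendsto_zero_of_mul_sq_le_sub_succ (half_pos hρ)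
    (V := fun l => dsgcdmmLyapunov K ρ ζs μs γs (ζ l) (μ l) (γ l))
    (fun l => dsgcdmmLyapunov_nonneg hρ.le ..) fun l => ?_
  calc ρ / 2 * ⟪C, ζ (l + 1) k⟫ ^ 2 ≤ ρ / 2 * ∑ i ∈ Icc 1 K, ⟪C, ζ (l + 1) i⟫ ^ 2 := by
        gcongr
        exact single_le_sum (fun i _ => sq_nonneg ⟪C, ζ (l + 1) i⟫) hk
    _ ≤ _ := by rw [le_sub_iff_add_le']; exact hdecrease l

/-- Theorem 1, part 1: the primal residual of the zero-sum constraint converges to zero, g_k^l = C⊤ζ_k^l → 0. -/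
theorem dsgcdmm_zero_sum_residual_tendsto_zero
    (d K : ℕ) (hd : 1 ≤ d) (hK : 2 ≤ K) (hKeven : Even K)
    (n : ℕ → ℕ) (hn : ∀ k ∈ Icc 1 K, 1 ≤ n k)
    (y : ∀ k, EuclideanSpace ℝ (Fin (n k)))
    (P : ∀ k, Matrix (Fin (n k)) (Fin d) ℝ)
    (lam : ℝ) (hlam : 0 ≤ lam)
    (ω : ℕ → Fin d → ℝ) (hω : ∀ k ∈ Icc 1 K, ∀ j, 0 ≤ ω k j)
    (C : EuclideanSpace ℝ (Fin d))
    (Q : ℕ → EuclideanSpace ℝ (Fin d) → ℝ)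
    (hQ : ∀ k, ∀ x : EuclideanSpace ℝ (Fin d), Q k x =
      (1 / (2 * (n k : ℝ))) * ‖y k - (P k).toEuclideanLin x‖ ^ 2
        + lam * ∑ j, ω k j * |x j|)
    (ρ : ℝ) (hρ : 0 < ρ)
    (ζ : ℕ → ℕ → EuclideanSpace ℝ (Fin d))
    (μ : ℕ → ℕ → ℝ)
    (γ : ℕ → ℕ → EuclideanSpace ℝ (Fin d))
    (hdyn1 : ∀ l : ℕ, ∀ z : EuclideanSpace ℝ (Fin d),
      Q 1 (ζ (l+1) 1) + μ l 1 * ⟪C, ζ (l+1) 1⟫ + (ρ/2) * ⟪C, ζ (l+1) 1⟫ ^ 2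
          + ⟪γ l 1, ζ (l+1) 1 - ζ l 2⟫ + (ρ/2) * ‖ζ (l+1) 1 - ζ l 2‖ ^ 2
        ≤ Q 1 z + μ l 1 * ⟪C, z⟫ + (ρ/2) * ⟪C, z⟫ ^ 2
          + ⟪γ l 1, z - ζ l 2⟫ + (ρ/2) * ‖z - ζ l 2‖ ^ 2)
    (hdynodd : ∀ l : ℕ, ∀ k, Odd k → 1 < k → k < K → ∀ z : EuclideanSpace ℝ (Fin d),
      Q k (ζ (l+1) k) + μ l k * ⟪C, ζ (l+1) k⟫ + (ρ/2) * ⟪C, ζ (l+1) k⟫ ^ 2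
          + ⟪γ l (k-1), ζ l (k-1) - ζ (l+1) k⟫ + ⟪γ l k, ζ (l+1) k - ζ l (k+1)⟫
          + (ρ/2) * ‖ζ l (k-1) - ζ (l+1) k‖ ^ 2 + (ρ/2) * ‖ζ (l+1) k - ζ l (k+1)‖ ^ 2
        ≤ Q k z + μ l k * ⟪C, z⟫ + (ρ/2) * ⟪C, z⟫ ^ 2
          + ⟪γ l (k-1), ζ l (k-1) - z⟫ + ⟪γ l k, z - ζ l (k+1)⟫
          + (ρ/2) * ‖ζ l (k-1) - z‖ ^ 2 + (ρ/2) * ‖z - ζ l (k+1)‖ ^ 2)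
    (hdyneven : ∀ l : ℕ, ∀ k, Even k → 0 < k → k < K → ∀ z : EuclideanSpace ℝ (Fin d),
      Q k (ζ (l+1) k) + μ l k * ⟪C, ζ (l+1) k⟫ + (ρ/2) * ⟪C, ζ (l+1) k⟫ ^ 2
          + ⟪γ l (k-1), ζ (l+1) (k-1) - ζ (l+1) k⟫ + ⟪γ l k, ζ (l+1) k - ζ (l+1) (k+1)⟫
          + (ρ/2) * ‖ζ (l+1) (k-1) - ζ (l+1) k‖ ^ 2 + (ρ/2) * ‖ζ (l+1) k - ζ (l+1) (k+1)‖ ^ 2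
        ≤ Q k z + μ l k * ⟪C, z⟫ + (ρ/2) * ⟪C, z⟫ ^ 2
          + ⟪γ l (k-1), ζ (l+1) (k-1) - z⟫ + ⟪γ l k, z - ζ (l+1) (k+1)⟫
          + (ρ/2) * ‖ζ (l+1) (k-1) - z‖ ^ 2 + (ρ/2) * ‖z - ζ (l+1) (k+1)‖ ^ 2)
    (hdynK : ∀ l : ℕ, ∀ z : EuclideanSpace ℝ (Fin d),
      Q K (ζ (l+1) K) + μ l K * ⟪C, ζ (l+1) K⟫ + (ρ/2) * ⟪C, ζ (l+1) K⟫ ^ 2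
          + ⟪γ l (K-1), ζ (l+1) (K-1) - ζ (l+1) K⟫ + (ρ/2) * ‖ζ (l+1) (K-1) - ζ (l+1) K‖ ^ 2
        ≤ Q K z + μ l K * ⟪C, z⟫ + (ρ/2) * ⟪C, z⟫ ^ 2
          + ⟪γ l (K-1), ζ (l+1) (K-1) - z⟫ + (ρ/2) * ‖ζ (l+1) (K-1) - z‖ ^ 2)
    (hμ : ∀ l : ℕ, ∀ k ∈ Icc 1 K, μ (l+1) k = μ l k + ρ * ⟪C, ζ (l+1) k⟫)
    (hγ : ∀ l : ℕ, ∀ k ∈ Icc 1 (K-1),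
      γ (l+1) k = γ l k + ρ • (ζ (l+1) k - ζ (l+1) (k+1)))
    (ζs : EuclideanSpace ℝ (Fin d)) (μs : ℕ → ℝ) (γs : ℕ → EuclideanSpace ℝ (Fin d))
    (hCζs : ⟪C, ζs⟫ = 0)
    (hmin : ∀ z : EuclideanSpace ℝ (Fin d), ⟪C, z⟫ = 0 →
      ∑ k ∈ Icc 1 K, Q k ζs ≤ ∑ k ∈ Icc 1 K, Q k z)
    (hsaddle : ∀ zf : ℕ → EuclideanSpace ℝ (Fin d),
      (∑ k ∈ Icc 1 K, Q k ζs) + (∑ k ∈ Icc 1 K, μs k * ⟪C, ζs⟫)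
          + (∑ k ∈ Icc 1 (K-1), ⟪γs k, ζs - ζs⟫)
        ≤ (∑ k ∈ Icc 1 K, Q k (zf k)) + (∑ k ∈ Icc 1 K, μs k * ⟪C, zf k⟫)
          + (∑ k ∈ Icc 1 (K-1), ⟪γs k, zf k - zf (k+1)⟫))
    :
    ∀ k ∈ Icc 1 K, Tendsto (fun l : ℕ => ⟪C, ζ l k⟫) atTop (nhds 0) :=
  dsgcdmm_zero_sum_residual_tendsto_zero_general d K hKeven n y P lam hlam ω hω C Q hQ ρ hρ ζ μ γ
    hdyn1 hdynodd hdyneven hdynK hμ hγ ζs μs γs hCζs hsaddle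
end
end
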